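/- Let L(ρ) = −i[H,ρ] + Σ_μ D_{L_μ}(ρ) be a Lindblad generator on matrices acting on ℂ^{n_A} ⊗ ℂ^{n_B}, with H Hermitian and L_μ arbitrary matrices on the tensor space. Then for every density matrix ρ_A on ℂ^{n_A}, the linear map ρ_B ↦ tr_A( L(ρ_A ⊗ ρ_B) ) is again of Lindblad form on ℂ^{n_B}: there exist a Hermitian matrix H_B and finitely many matrices X_j on ℂ^{n_B} such that tr_A( L(ρ_A ⊗ ρ_B) ) = −i[H_B, ρ_B] + Σ_j D_{X_j}(ρ_B) for every ρ_B. -/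

import Mathlib

open scoped Matrix ComplexOrder Kronecker

/-- The dissipator `D_X(ρ) = XρX† − (1/2)(X†Xρ + ρX†X)` (here on an arbitrary
finite index type). -/
noncomputable def dissipator {ι : Type*} [Fintype ι] (X ρ : Matrix ι ι ℂ) :
    Matrix ι ι ℂ :=
  X * ρ * Xᴴ - (1 / 2 : ℂ) • (Xᴴ * X * ρ + ρ * (Xᴴ * X))

/-- Partial trace over the first tensor factor:
`(tr_A M)_{j,j'} = Σ_i M_{(i,j),(i,j')}`. -/
noncomputable def ptraceA {nA nB : ℕ} (M : Matrix (Fin nA × Fin nB) (Fin nA × Fin nB) ℂ) :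
    Matrix (Fin nB) (Fin nB) ℂ :=
  fun j j' => ∑ i, M (i, j) (i, j')

/-!
Write `ρ_A = ∑ₖ vₖ vₖᴴ` and `Wₖ = |vₖ⟩ ⊗ I`, so that `ρ_A ⊗ ρ_B = ∑ₖ Wₖ ρ_B Wₖᴴ`. With
`Eᵢ = |i⟩ ⊗ I` the partial trace is `tr_A M = ∑ᵢ Eᵢᴴ M Eᵢ`, and `Wₖᴴ Eᵢ` is the scalar `conj (vₖ i)`;
hence `tr_A (M Wₖ ρ Wₖᴴ) = Wₖᴴ M Wₖ ρ` and `tr_A (L Wₖ ρ Wₖᴴ Lᴴ) = ∑ᵢ Xᵢ ρ Xᵢᴴ` with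
`Xᵢ = Eᵢᴴ L Wₖ`, while `∑ᵢ Eᵢ Eᵢᴴ = I` gives `Wₖᴴ Lᴴ L Wₖ = ∑ᵢ Xᵢᴴ Xᵢ`. So each `k` contributes a
Lindblad generator with Hamiltonian `Wₖᴴ H Wₖ` and jump operators `Eᵢᴴ L_μ Wₖ`, and Lindblad
generators are closed under sums.
-/

open Matrix

section TensorCol

variable {ι : Type*} (κ : Type*) [DecidableEq κ]

/-- `|v⟩ ⊗ I_κ`, as a matrix from `κ` to `ι × κ`. -/
def tensorCol (v : ι → ℂ) : Matrix (ι × κ) κ ℂ :=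
  Matrix.of fun p j => if p.2 = j then v p.1 else 0

@[simp]
theorem tensorCol_apply (v : ι → ℂ) (p : ι × κ) (j : κ) :
    tensorCol κ v p j = if p.2 = j then v p.1 else 0 :=
  rfl

def unitTensorCol [DecidableEq ι] (i : ι) : Matrix (ι × κ) κ ℂ :=
  tensorCol κ (Pi.single i 1)

variable {κ}

theorem tensorCol_eq_sum [Fintype ι] [DecidableEq ι] (v : ι → ℂ) :
    tensorCol κ v = ∑ i, v i • unitTensorCol κ i := by
  ext ⟨a, b⟩ j
  by_cases h : b = j <;> simp [unitTensorCol, Matrix.sum_apply, Pi.single_apply, h]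

variable [Fintype κ]

theorem kronecker_vecMulVec_star (v : ι → ℂ) (ρ : Matrix κ κ ℂ) :
    vecMulVec v (star v) ⊗ₖ ρ = tensorCol κ v * ρ * (tensorCol κ v)ᴴ := by
  ext ⟨a, b⟩ ⟨c, d⟩
  simp only [kroneckerMap_apply, vecMulVec_apply, Pi.star_apply, Matrix.mul_apply,
    tensorCol_apply, ite_mul, zero_mul, Finset.sum_ite_eq, Finset.mem_univ, ↓reduceIte,
    conjTranspose_apply, apply_ite, star_zero, mul_zero]
  ring

variable [Fintype ι] [DecidableEq ι]

theorem conjTranspose_tensorCol_mul_unitTensorCol (v : ι → ℂ) (i : ι) :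
    (tensorCol κ v)ᴴ * unitTensorCol κ i = star (v i) • (1 : Matrix κ κ ℂ) := by
  ext j j'
  by_cases h : j = j' <;>
    simp [unitTensorCol, Matrix.mul_apply, Fintype.sum_prod_type, Pi.single_apply, h, eq_comm]

theorem sum_unitTensorCol_mul_conjTranspose :
    ∑ i : ι, unitTensorCol κ i * (unitTensorCol κ i)ᴴ = 1 := by
  ext ⟨a, b⟩ ⟨c, d⟩
  by_cases hac : a = c <;> by_cases hbd : b = d <;>
    simp [unitTensorCol, Matrix.sum_apply, Matrix.mul_apply, Pi.single_apply, Matrix.one_apply,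
      hac, hbd, eq_comm]

theorem conjTranspose_mul_self_eq_sum_unitTensorCol {ν : Type*} (L : Matrix (ι × κ) ν ℂ) :
    Lᴴ * L = ∑ i : ι, ((unitTensorCol κ i)ᴴ * L)ᴴ * ((unitTensorCol κ i)ᴴ * L) := by
  conv_lhs => rw [← Matrix.mul_one Lᴴ, ← sum_unitTensorCol_mul_conjTranspose]
  simp only [Matrix.mul_sum, Matrix.sum_mul, conjTranspose_mul, conjTranspose_conjTranspose,
    Matrix.mul_assoc]

end TensorCol

theorem sum_kronecker {J l m n p : Type*} (s : Finset J) (A : J → Matrix l m ℂ)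
    (B : Matrix n p ℂ) : (∑ k ∈ s, A k) ⊗ₖ B = ∑ k ∈ s, A k ⊗ₖ B := by
  ext
  simp [Matrix.sum_apply, Finset.sum_mul]

section PartialTrace

variable {nA nB : ℕ}

@[simps]
noncomputable def ptraceALinearMap :
    Matrix (Fin nA × Fin nB) (Fin nA × Fin nB) ℂ →ₗ[ℂ] Matrix (Fin nB) (Fin nB) ℂ where
  toFun := ptraceA
  map_add' M N := by ext; simp [ptraceA, Finset.sum_add_distrib]
  map_smul' c M := by ext; simp [ptraceA, Finset.mul_sum]

theorem ptraceA_conjTranspose (M : Matrix (Fin nA × Fin nB) (Fin nA × Fin nB) ℂ) :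
    ptraceA Mᴴ = (ptraceA M)ᴴ := by
  ext
  simp [ptraceA]

theorem ptraceA_eq_sum (M : Matrix (Fin nA × Fin nB) (Fin nA × Fin nB) ℂ) :
    ptraceA M = ∑ i : Fin nA, (unitTensorCol (Fin nB) i)ᴴ * M * unitTensorCol (Fin nB) i := by
  ext j j'
  simp [ptraceA, unitTensorCol, Matrix.sum_apply, Matrix.mul_apply, Fintype.sum_prod_type,
    Pi.single_apply, apply_ite, ite_mul]

end PartialTrace

section Sandwich

variable {nA nB : ℕ} (v : Fin nA → ℂ) (ρ : Matrix (Fin nB) (Fin nB) ℂ)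

theorem ptraceA_mul_sandwich (M : Matrix (Fin nA × Fin nB) (Fin nA × Fin nB) ℂ) :
    ptraceA (M * (tensorCol (Fin nB) v * ρ * (tensorCol (Fin nB) v)ᴴ))
      = (tensorCol (Fin nB) v)ᴴ * M * tensorCol (Fin nB) v * ρ := by
  set W := tensorCol (Fin nB) v
  calc ptraceA (M * (W * ρ * Wᴴ))
      = ∑ i : Fin nA,
          (unitTensorCol (Fin nB) i)ᴴ * M * W * ρ * (Wᴴ * unitTensorCol (Fin nB) i) := by
        rw [ptraceA_eq_sum]; simp only [Matrix.mul_assoc]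
    _ = ∑ i : Fin nA, star (v i) • ((unitTensorCol (Fin nB) i)ᴴ * M * W * ρ) := by
        simp only [W, conjTranspose_tensorCol_mul_unitTensorCol, Matrix.mul_smul, Matrix.mul_one]
    _ = (∑ i : Fin nA, v i • unitTensorCol (Fin nB) i)ᴴ * M * W * ρ := by
        simp only [conjTranspose_sum, conjTranspose_smul, Matrix.sum_mul, Matrix.smul_mul]
    _ = Wᴴ * M * W * ρ := by rw [← tensorCol_eq_sum]

theorem ptraceA_sandwich_mul (M : Matrix (Fin nA × Fin nB) (Fin nA × Fin nB) ℂ) :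
    ptraceA (tensorCol (Fin nB) v * ρ * (tensorCol (Fin nB) v)ᴴ * M)
      = ρ * ((tensorCol (Fin nB) v)ᴴ * M * tensorCol (Fin nB) v) := by
  calc _ = (ptraceA (Mᴴ * (tensorCol (Fin nB) v * ρᴴ * (tensorCol (Fin nB) v)ᴴ)))ᴴ := by
        rw [← ptraceA_conjTranspose]
        simp only [conjTranspose_mul, conjTranspose_conjTranspose, Matrix.mul_assoc]
    _ = _ := by
        rw [ptraceA_mul_sandwich]
        simp only [conjTranspose_mul, conjTranspose_conjTranspose, Matrix.mul_assoc]

theorem ptraceA_conj_sandwich (L : Matrix (Fin nA × Fin nB) (Fin nA × Fin nB) ℂ) :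
    ptraceA (L * (tensorCol (Fin nB) v * ρ * (tensorCol (Fin nB) v)ᴴ) * Lᴴ)
      = ∑ i : Fin nA, ((unitTensorCol (Fin nB) i)ᴴ * L * tensorCol (Fin nB) v) * ρ *
          ((unitTensorCol (Fin nB) i)ᴴ * L * tensorCol (Fin nB) v)ᴴ := by
  rw [ptraceA_eq_sum]
  simp only [conjTranspose_mul, conjTranspose_conjTranspose, Matrix.mul_assoc]

theorem ptraceA_dissipator_sandwich (L : Matrix (Fin nA × Fin nB) (Fin nA × Fin nB) ℂ) :
    ptraceA (dissipator L (tensorCol (Fin nB) v * ρ * (tensorCol (Fin nB) v)ᴴ))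
      = ∑ i : Fin nA, dissipator ((unitTensorCol (Fin nB) i)ᴴ * L * tensorCol (Fin nB) v) ρ := by
  have hLL : (tensorCol (Fin nB) v)ᴴ * (Lᴴ * L) * tensorCol (Fin nB) v
      = ∑ i : Fin nA, ((unitTensorCol (Fin nB) i)ᴴ * L * tensorCol (Fin nB) v)ᴴ *
          ((unitTensorCol (Fin nB) i)ᴴ * L * tensorCol (Fin nB) v) := by
    simpa only [conjTranspose_mul, conjTranspose_conjTranspose, Matrix.mul_assoc] using
      conjTranspose_mul_self_eq_sum_unitTensorCol (L * tensorCol (Fin nB) v)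
  simp only [dissipator, ← ptraceALinearMap_apply, map_sub, map_smul, map_add]
  simp only [ptraceALinearMap_apply, ptraceA_conj_sandwich, ptraceA_mul_sandwich,
    ptraceA_sandwich_mul, hLL, Matrix.sum_mul, Matrix.mul_sum, Finset.sum_sub_distrib,
    smul_add, Finset.sum_add_distrib, Finset.smul_sum]

end Sandwich

section Lindblad

variable {κ : Type*} [Fintype κ]

noncomputable def lindbladian {J : Type*} [Fintype J] (H : Matrix κ κ ℂ) (L : J → Matrix κ κ ℂ)
    (ρ : Matrix κ κ ℂ) : Matrix κ κ ℂ :=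
  (-Complex.I) • (H * ρ - ρ * H) + ∑ μ, dissipator (L μ) ρ

def IsLindbladForm (Φ : Matrix κ κ ℂ → Matrix κ κ ℂ) : Prop :=
  ∃ H : Matrix κ κ ℂ, H.IsHermitian ∧
    ∃ (p : ℕ) (X : Fin p → Matrix κ κ ℂ), ∀ ρ, Φ ρ = lindbladian H X ρ

theorem dissipator_add (X ρ σ : Matrix κ κ ℂ) :
    dissipator X (ρ + σ) = dissipator X ρ + dissipator X σ := by
  simp only [dissipator, Matrix.mul_add, Matrix.add_mul, smul_add]
  abel

theorem lindbladian_add {J : Type*} [Fintype J] (H : Matrix κ κ ℂ) (L : J → Matrix κ κ ℂ)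
    (ρ σ : Matrix κ κ ℂ) : lindbladian H L (ρ + σ) = lindbladian H L ρ + lindbladian H L σ := by
  simp only [lindbladian, dissipator_add, Finset.sum_add_distrib, Matrix.mul_add,
    Matrix.add_mul, smul_add, smul_sub]
  abel

theorem lindbladian_add_lindbladian {J J' : Type*} [Fintype J] [Fintype J']
    (H H' : Matrix κ κ ℂ) (L : J → Matrix κ κ ℂ) (L' : J' → Matrix κ κ ℂ) (ρ : Matrix κ κ ℂ) :
    lindbladian H L ρ + lindbladian H' L' ρ = lindbladian (H + H') (Sum.elim L L') ρ := by
  simp only [lindbladian, Fintype.sum_sum_type, Sum.elim_inl, Sum.elim_inr, Matrix.mul_add,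
    Matrix.add_mul, smul_add, smul_sub]
  abel

theorem IsLindbladForm.of_fintype {J : Type*} [Fintype J] {Φ : Matrix κ κ ℂ → Matrix κ κ ℂ}
    {H : Matrix κ κ ℂ} (hH : H.IsHermitian) (L : J → Matrix κ κ ℂ)
    (hΦ : ∀ ρ, Φ ρ = lindbladian H L ρ) : IsLindbladForm Φ := by
  refine ⟨H, hH, Fintype.card J, L ∘ (Fintype.equivFin J).symm, fun ρ => ?_⟩
  rw [hΦ, lindbladian, lindbladian, Function.comp_def,
    Equiv.sum_comp (Fintype.equivFin J).symm fun μ => dissipator (L μ) ρ]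

theorem isLindbladForm_zero : IsLindbladForm (0 : Matrix κ κ ℂ → Matrix κ κ ℂ) :=
  ⟨0, isHermitian_zero, 0, Fin.elim0, fun ρ => by simp [lindbladian]⟩

theorem IsLindbladForm.add {Φ Ψ : Matrix κ κ ℂ → Matrix κ κ ℂ} (hΦ : IsLindbladForm Φ)
    (hΨ : IsLindbladForm Ψ) : IsLindbladForm (Φ + Ψ) := by
  obtain ⟨H, hH, p, X, hX⟩ := hΦ
  obtain ⟨H', hH', q, X', hX'⟩ := hΨ
  exact .of_fintype (hH.add hH') (Sum.elim X X') fun ρ => by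
    rw [Pi.add_apply, hX, hX', lindbladian_add_lindbladian]

theorem isLindbladForm_sum {K : Type*} (s : Finset K) (Φ : K → Matrix κ κ ℂ → Matrix κ κ ℂ)
    (hΦ : ∀ k ∈ s, IsLindbladForm (Φ k)) : IsLindbladForm (∑ k ∈ s, Φ k) :=
  Finset.sum_induction Φ IsLindbladForm (fun _ _ => IsLindbladForm.add) isLindbladForm_zero hΦ

end Lindblad

section Reduction

variable {nA nB : ℕ} {J : Type*} [Fintype J] {H : Matrix (Fin nA × Fin nB) (Fin nA × Fin nB) ℂ}
  (L : J → Matrix (Fin nA × Fin nB) (Fin nA × Fin nB) ℂ)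

theorem isLindbladForm_ptraceA_lindbladian_sandwich (hH : H.IsHermitian) (v : Fin nA → ℂ) :
    IsLindbladForm fun ρ : Matrix (Fin nB) (Fin nB) ℂ =>
      ptraceA (lindbladian H L (tensorCol (Fin nB) v * ρ * (tensorCol (Fin nB) v)ᴴ)) := by
  refine .of_fintype (isHermitian_conjTranspose_mul_mul (tensorCol (Fin nB) v) hH)
    (fun μi : J × Fin nA => (unitTensorCol (Fin nB) μi.2)ᴴ * L μi.1 * tensorCol (Fin nB) v)
    fun ρ => ?_
  simp only [lindbladian, ← ptraceALinearMap_apply, map_add, map_smul, map_sub, map_sum]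
  simp only [ptraceALinearMap_apply, ptraceA_mul_sandwich,
    ptraceA_sandwich_mul, ptraceA_dissipator_sandwich, Fintype.sum_prod_type]

theorem isLindbladForm_ptraceA_lindbladian_kronecker (hH : H.IsHermitian)
    {ρA : Matrix (Fin nA) (Fin nA) ℂ} (hρA : ρA.PosSemidef) :
    IsLindbladForm fun ρB : Matrix (Fin nB) (Fin nB) ℂ =>
      ptraceA (lindbladian H L (ρA ⊗ₖ ρB)) := by
  obtain ⟨r, v, rfl⟩ := posSemidef_iff_eq_sum_vecMulVec.mp hρA
  have hsplit : (fun ρB : Matrix (Fin nB) (Fin nB) ℂ =>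
      ptraceA (lindbladian H L ((∑ k, vecMulVec (v k) (star (v k))) ⊗ₖ ρB)))
      = ∑ k, fun ρB : Matrix (Fin nB) (Fin nB) ℂ => ptraceA
          (lindbladian H L (tensorCol (Fin nB) (v k) * ρB * (tensorCol (Fin nB) (v k))ᴴ)) := by
    funext ρB
    simp only [sum_kronecker, kronecker_vecMulVec_star, Finset.sum_apply]
    exact map_sum ((ptraceALinearMap : _ →ₗ[ℂ] Matrix (Fin nB) (Fin nB) ℂ).toAddMonoidHom.comp
      (AddMonoidHom.mk' (lindbladian H L) (lindbladian_add H L))) _ _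
  rw [hsplit]
  exact isLindbladForm_sum _ _ fun k _ => isLindbladForm_ptraceA_lindbladian_sandwich L hH (v k)

end Reduction

theorem stmt6_general {nA nB m : ℕ}
    (H : Matrix (Fin nA × Fin nB) (Fin nA × Fin nB) ℂ) (hH : H.IsHermitian)
    (Lop : Fin m → Matrix (Fin nA × Fin nB) (Fin nA × Fin nB) ℂ)
    (ρA : Matrix (Fin nA) (Fin nA) ℂ) (hpsd : ρA.PosSemidef) :
    ∃ HB : Matrix (Fin nB) (Fin nB) ℂ, HB.IsHermitian ∧
      ∃ (p : ℕ) (Xop : Fin p → Matrix (Fin nB) (Fin nB) ℂ),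
        ∀ ρB : Matrix (Fin nB) (Fin nB) ℂ,
          ptraceA ((-Complex.I) • (H * (ρA ⊗ₖ ρB) - (ρA ⊗ₖ ρB) * H)
              + ∑ μ, dissipator (Lop μ) (ρA ⊗ₖ ρB))
            = (-Complex.I) • (HB * ρB - ρB * HB) + ∑ j, dissipator (Xop j) ρB :=
  isLindbladForm_ptraceA_lindbladian_kronecker Lop hH hpsd

/-- for a Lindblad generator `L` on `ℂ^{n_A} ⊗ ℂ^{n_B}` and a density
matrix `ρ_A`, the map `ρ_B ↦ tr_A(L(ρ_A ⊗ ρ_B))` is again of Lindblad form on `ℂ^{n_B}`. -/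
theorem stmt6 {nA nB m : ℕ}
    (H : Matrix (Fin nA × Fin nB) (Fin nA × Fin nB) ℂ) (hH : H.IsHermitian)
    (Lop : Fin m → Matrix (Fin nA × Fin nB) (Fin nA × Fin nB) ℂ)
    (ρA : Matrix (Fin nA) (Fin nA) ℂ) (hpsd : ρA.PosSemidef) (htr : ρA.trace = 1) :
    ∃ HB : Matrix (Fin nB) (Fin nB) ℂ, HB.IsHermitian ∧
      ∃ (p : ℕ) (Xop : Fin p → Matrix (Fin nB) (Fin nB) ℂ),
        ∀ ρB : Matrix (Fin nB) (Fin nB) ℂ,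
          ptraceA ((-Complex.I) • (H * (ρA ⊗ₖ ρB) - (ρA ⊗ₖ ρB) * H)
              + ∑ μ, dissipator (Lop μ) (ρA ⊗ₖ ρB))
            = (-Complex.I) • (HB * ρB - ρB * HB) + ∑ j, dissipator (Xop j) ρB :=
  stmt6_general H hH Lop ρA hpsd
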